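/- Let S ⊆ ℤ^r be nonempty and finite, a_s ∈ K[n]\{0} for s ∈ S, f ∈ K[n], and let p ∈ S be a corner point of S with inner vector v ∈ ℝ^r \ {0} (so ⟨v, s − p⟩ > 0 for all s ∈ S \ {p}). Then for every s > 0 there exist finite sets W ⊆ { x ∈ ℤ^r : 0 ≤ ⟨v, x − p⟩ ≤ s·⟨v,v⟩ } and S' ⊆ { x ∈ ℤ^r : ⟨v, x − p⟩ > s·⟨v,v⟩ } and polynomials b ∈ K[n] and b_t ∈ K[n] for t ∈ S', with p ∈ W, such that every solution y ∈ K(n) of the PLDE ∑_{s∈S} a_s N^s y = f satisfies (∏_{i ∈ W − p} N^i a_p) · N^p y = b + ∑_{t ∈ S'} b_t · N^t y in K(n). -/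
import Mathlib


open MvPolynomial

/-- The substitution homomorphism `n_j ↦ n_j + i_j` on `K[n₁,…,n_r]`. -/
noncomputable def mShiftHom (K : Type*) [Field K] {r : ℕ} (i : Fin r → ℤ) :
    MvPolynomial (Fin r) K →ₐ[K] MvPolynomial (Fin r) K :=
  aeval (fun j => X j + C (i j : K))

/-- The shift automorphism `N^i` of `K[n₁,…,n_r]`, determined by `n_j ↦ n_j + i_j`. -/
noncomputable def mShift (K : Type*) [Field K] {r : ℕ} (i : Fin r → ℤ) :
    MvPolynomial (Fin r) K ≃ₐ[K] MvPolynomial (Fin r) K :=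
  AlgEquiv.ofAlgHom (mShiftHom K i) (mShiftHom K (-i))
    (by apply MvPolynomial.algHom_ext; intro j; simp [mShiftHom])
    (by apply MvPolynomial.algHom_ext; intro j; simp [mShiftHom])

/-- `Spread(p,q) = { i ∈ ℤ^r : gcd(p, N^i q) ≠ 1 }`, where `gcd ≠ 1` (not a unit)
is expressed as `¬ IsRelPrime`. -/
def mSpread {K : Type*} [Field K] {r : ℕ} (p q : MvPolynomial (Fin r) K) :
    Set (Fin r → ℤ) :=
  {i | ¬ IsRelPrime p (mShift K i q)}

/-- The canonical embedding of `K[n₁,…,n_r]` into its fraction field `K(n₁,…,n_r)`. -/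
noncomputable def toFrac (K : Type*) [Field K] {r : ℕ} :
    MvPolynomial (Fin r) K →+* FractionRing (MvPolynomial (Fin r) K) :=
  algebraMap _ _

/-- The shift automorphism `N^i` extended to the fraction field `K(n₁,…,n_r)`. -/
noncomputable def fShift (K : Type*) [Field K] {r : ℕ} (i : Fin r → ℤ) :
    FractionRing (MvPolynomial (Fin r) K) ≃+* FractionRing (MvPolynomial (Fin r) K) :=
  IsFractionRing.ringEquivOfRingEquiv (mShift K i).toRingEquiv

section Aux

variable {K : Type*} [Field K] {r : ℕ}

lemma mShift_zero (q : MvPolynomial (Fin r) K) : mShift K 0 q = q := by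
  simp [mShift, mShiftHom, aeval_X_left_apply]

lemma mShift_mShift (i t : Fin r → ℤ) (q : MvPolynomial (Fin r) K) :
    mShift K i (mShift K t q) = mShift K (i + t) q := by
  have h : ((mShift K i).toAlgHom.comp (mShift K t).toAlgHom) = (mShift K (i + t)).toAlgHom := by
    apply MvPolynomial.algHom_ext
    intro j
    simp [mShift, mShiftHom]
    ring
  exact AlgHom.congr_fun h q

lemma fShift_toFrac (i : Fin r → ℤ) (q : MvPolynomial (Fin r) K) :
    fShift K i (toFrac K q) = toFrac K (mShift K i q) :=
  IsFractionRing.ringEquivOfRingEquiv_algebraMap _ q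

lemma fShift_fShift (i t : Fin r → ℤ) (y : FractionRing (MvPolynomial (Fin r) K)) :
    fShift K i (fShift K t y) = fShift K (i + t) y := by
  have h : ((fShift K i).toRingHom.comp (fShift K t).toRingHom) = (fShift K (i + t)).toRingHom := by
    apply IsLocalization.ringHom_ext (nonZeroDivisors (MvPolynomial (Fin r) K))
    apply RingHom.ext
    intro q
    simp only [RingHom.comp_apply, RingEquiv.toRingHom_eq_coe, RingHom.coe_coe]
    show fShift K i (fShift K t (toFrac K q)) = fShift K (i + t) (toFrac K q)
    rw [fShift_toFrac, fShift_toFrac, fShift_toFrac, mShift_mShift]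
  exact RingHom.congr_fun h y

set_option maxHeartbeats 1000000 in
set_option synthInstance.maxHeartbeats 400000 in
theorem key_lemma
    (S : Finset (Fin r → ℤ))
    (a : (Fin r → ℤ) → MvPolynomial (Fin r) K)
    (f : MvPolynomial (Fin r) K)
    (p : Fin r → ℤ) (hp : p ∈ S)
    (val : (Fin r → ℤ) → ℝ)
    (hval0 : val p = 0)
    (hvaladd : ∀ u t, val (u + t - p) = val u + val t)
    (c δ : ℝ) (hc : 0 ≤ c) (hδ : 0 < δ)
    (hδle : ∀ t ∈ S, t ≠ p → δ ≤ val t)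
    (n : ℕ) :
    ∃ (W S' : Finset (Fin r → ℤ)) (b : MvPolynomial (Fin r) K)
      (b' : (Fin r → ℤ) → MvPolynomial (Fin r) K),
      p ∈ W ∧
      (∀ w ∈ W, 0 ≤ val w ∧ val w ≤ c) ∧
      (∀ t ∈ S', t ∉ W ∧ 0 < val t ∧ ∀ w ∈ W, val w ≤ val t) ∧
      (∀ t ∈ S', c < val t ∨ (n : ℝ) * δ ≤ val t) ∧
      ∀ y : FractionRing (MvPolynomial (Fin r) K),
        (∑ t ∈ S, toFrac K (a t) * fShift K t y = toFrac K f) →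
        toFrac K (∏ w ∈ W, mShift K (w - p) (a p)) * fShift K p y
          = toFrac K b + ∑ t ∈ S', toFrac K (b' t) * fShift K t y := by
  classical
  induction n with
  | zero =>
    refine ⟨{p}, S.erase p, f, fun t => -(a t), Finset.mem_singleton_self p, ?_, ?_, ?_, ?_⟩
    · intro w hw
      rw [Finset.mem_singleton] at hw
      subst hw
      simp [hval0, hc]
    · intro t ht
      obtain ⟨htne, htS⟩ := Finset.mem_erase.1 ht
      have h1 : 0 < val t := lt_of_lt_of_le hδ (hδle t htS htne)
      refine ⟨?_, h1, ?_⟩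
      · rw [Finset.mem_singleton]; exact htne
      · intro w hw
        rw [Finset.mem_singleton] at hw
        subst hw
        rw [hval0]; exact le_of_lt h1
    · intro t ht
      right
      push_cast
      rw [zero_mul]
      obtain ⟨htne, htS⟩ := Finset.mem_erase.1 ht
      exact le_of_lt (lt_of_lt_of_le hδ (hδle t htS htne))
    · intro y hy
      rw [Finset.prod_singleton, sub_self, mShift_zero]
      have hneg : ∑ t ∈ S.erase p, toFrac K (-(a t)) * fShift K t y
          = -∑ t ∈ S.erase p, toFrac K (a t) * fShift K t y := by
        rw [← Finset.sum_neg_distrib]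
        exact Finset.sum_congr rfl fun t _ => by rw [map_neg]; ring
      rw [← Finset.add_sum_erase _ _ hp] at hy
      rw [hneg]
      linear_combination hy
  | succ n ih =>
    obtain ⟨W0, S'0, b0, b'0, h1, h2, h3, h4, h5⟩ := ih
    have main : ∀ m : ℕ, ∀ (W S' : Finset (Fin r → ℤ)) (b : MvPolynomial (Fin r) K)
        (b' : (Fin r → ℤ) → MvPolynomial (Fin r) K),
        p ∈ W →
        (∀ w ∈ W, 0 ≤ val w ∧ val w ≤ c) →
        (∀ t ∈ S', t ∉ W ∧ 0 < val t ∧ ∀ w ∈ W, val w ≤ val t) →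
        (∀ t ∈ S', c < val t ∨ (n : ℝ) * δ ≤ val t) →
        (∀ y : FractionRing (MvPolynomial (Fin r) K),
          (∑ t ∈ S, toFrac K (a t) * fShift K t y = toFrac K f) →
          toFrac K (∏ w ∈ W, mShift K (w - p) (a p)) * fShift K p y
            = toFrac K b + ∑ t ∈ S', toFrac K (b' t) * fShift K t y) →
        (S'.filter (fun t => val t ≤ c ∧ val t < ((n : ℝ) + 1) * δ)).card ≤ m →
        ∃ (W S' : Finset (Fin r → ℤ)) (b : MvPolynomial (Fin r) K)
          (b' : (Fin r → ℤ) → MvPolynomial (Fin r) K),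
          p ∈ W ∧
          (∀ w ∈ W, 0 ≤ val w ∧ val w ≤ c) ∧
          (∀ t ∈ S', t ∉ W ∧ 0 < val t ∧ ∀ w ∈ W, val w ≤ val t) ∧
          (∀ t ∈ S', c < val t ∨ ((n : ℕ) + 1 : ℝ) * δ ≤ val t) ∧
          ∀ y : FractionRing (MvPolynomial (Fin r) K),
            (∑ t ∈ S, toFrac K (a t) * fShift K t y = toFrac K f) →
            toFrac K (∏ w ∈ W, mShift K (w - p) (a p)) * fShift K p y
              = toFrac K b + ∑ t ∈ S', toFrac K (b' t) * fShift K t y := by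
      intro m
      induction m with
      | zero =>
        intro W S' b b' k1 k2 k3 k4 k5 hcard
        refine ⟨W, S', b, b', k1, k2, k3, ?_, k5⟩
        have hemp : S'.filter (fun t => val t ≤ c ∧ val t < ((n : ℝ) + 1) * δ) = ∅ :=
          Finset.card_eq_zero.1 (Nat.le_zero.1 hcard)
        intro t ht
        by_cases hct : c < val t
        · exact Or.inl hct
        · right
          have : t ∉ S'.filter (fun t => val t ≤ c ∧ val t < ((n : ℝ) + 1) * δ) := by
            rw [hemp]; exact Finset.notMem_empty t
          rw [Finset.mem_filter] at this
          push_neg at this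
          have h2' := this ht (le_of_not_gt hct)
          push_cast
          linarith
      | succ m ihm =>
        intro W S' b b' k1 k2 k3 k4 k5 hcard
        set B := S'.filter (fun t => val t ≤ c ∧ val t < ((n : ℝ) + 1) * δ) with hB
        by_cases hBne : B.Nonempty
        · obtain ⟨t₀, ht₀B, ht₀min⟩ := B.exists_min_image val hBne
          have hmf := Finset.mem_filter.1 ht₀B
          have ht₀S' : t₀ ∈ S' := hmf.1
          have ht₀c : val t₀ ≤ c := hmf.2.1
          have ht₀lt : val t₀ < ((n : ℝ) + 1) * δ := hmf.2.2
          obtain ⟨ht₀W, ht₀pos, ht₀ge⟩ := k3 t₀ ht₀S'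
          have ht₀n : (n : ℝ) * δ ≤ val t₀ := (k4 t₀ ht₀S').resolve_left (not_lt.2 ht₀c)
          have ht₀minS' : ∀ t ∈ S', val t₀ ≤ val t := by
            intro t ht
            by_cases h' : val t ≤ c ∧ val t < ((n : ℝ) + 1) * δ
            · exact ht₀min t (Finset.mem_filter.2 ⟨ht, h'⟩)
            · push_neg at h'
              by_cases hc' : val t ≤ c
              · have := h' hc'; linarith
              · linarith [le_of_not_ge hc']
          have hvalφ : ∀ t, val (t₀ - p + t) = val t₀ + val t := by
            intro t
            rw [sub_add_eq_add_sub]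
            exact hvaladd t₀ t
          have hBimgval : ∀ u ∈ (S.erase p).image (fun t => t₀ - p + t),
              val t₀ + δ ≤ val u := by
            intro u hu
            obtain ⟨t, ht, rfl⟩ := Finset.mem_image.1 hu
            rw [hvalφ]
            have := hδle t (Finset.mem_erase.1 ht).2 (Finset.mem_erase.1 ht).1
            linarith
          have hn1 : ((n : ℝ) + 1) * δ = (n : ℝ) * δ + δ := by ring
          refine ihm (insert t₀ W)
            ((S'.erase t₀) ∪ (S.erase p).image (fun t => t₀ - p + t))
            (mShift K (t₀ - p) (a p) * b + b' t₀ * mShift K (t₀ - p) f)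
            (fun u =>
              (if u ∈ S'.erase t₀ then mShift K (t₀ - p) (a p) * b' u else 0) +
              (if u ∈ (S.erase p).image (fun t => t₀ - p + t) then
                -(b' t₀ * mShift K (t₀ - p) (a (u - (t₀ - p)))) else 0))
            (Finset.mem_insert_of_mem k1) ?_ ?_ ?_ ?_ ?_
          · intro w hw
            rcases Finset.mem_insert.1 hw with rfl | hw'
            · exact ⟨le_of_lt ht₀pos, ht₀c⟩
            · exact k2 w hw'
          · intro t ht
            rcases Finset.mem_union.1 ht with htA | htB
            · obtain ⟨htne, htS'⟩ := Finset.mem_erase.1 htA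
              obtain ⟨hw, hpos, hge⟩ := k3 t htS'
              refine ⟨?_, hpos, ?_⟩
              · intro hmem
                rcases Finset.mem_insert.1 hmem with h | h
                · exact htne h
                · exact hw h
              · intro w hw'
                rcases Finset.mem_insert.1 hw' with rfl | h
                · exact ht₀minS' t htS'
                · exact hge w h
            · have hval' := hBimgval t htB
              have hgt : ∀ w ∈ insert t₀ W, val w < val t := by
                intro w hw'
                rcases Finset.mem_insert.1 hw' with rfl | h
                · linarith
                · have := ht₀ge w h; linarith
              exact ⟨fun hmem => lt_irrefl _ (hgt t hmem), by linarith,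
                fun w hw' => le_of_lt (hgt w hw')⟩
          · intro t ht
            rcases Finset.mem_union.1 ht with htA | htB
            · exact k4 t (Finset.mem_erase.1 htA).2
            · right
              have hval' := hBimgval t htB
              linarith
          · intro y hy
            have hold := k5 y hy
            have h0 := congrArg (⇑(fShift K (t₀ - p))) hy
            simp only [map_sum, map_mul, fShift_toFrac, fShift_fShift] at h0
            rw [← Finset.add_sum_erase _ _ hp, sub_add_cancel] at h0
            rw [← Finset.add_sum_erase _ _ ht₀S'] at hold
            rw [Finset.prod_insert ht₀W, map_mul, map_add, map_mul, map_mul]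
            have hsum : ∑ u ∈ (S'.erase t₀) ∪ (S.erase p).image (fun t => t₀ - p + t),
                toFrac K ((if u ∈ S'.erase t₀ then mShift K (t₀ - p) (a p) * b' u else 0) +
                  (if u ∈ (S.erase p).image (fun t => t₀ - p + t) then
                    -(b' t₀ * mShift K (t₀ - p) (a (u - (t₀ - p)))) else 0)) * fShift K u y
                = toFrac K (mShift K (t₀ - p) (a p)) *
                    (∑ u ∈ S'.erase t₀, toFrac K (b' u) * fShift K u y)
                  + -(toFrac K (b' t₀) *
                    ∑ t ∈ S.erase p,
                      toFrac K (mShift K (t₀ - p) (a t)) * fShift K (t₀ - p + t) y) := by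
              have e1 : ∀ u ∈ (S'.erase t₀) ∪ (S.erase p).image (fun t => t₀ - p + t),
                  toFrac K ((if u ∈ S'.erase t₀ then mShift K (t₀ - p) (a p) * b' u else 0) +
                    (if u ∈ (S.erase p).image (fun t => t₀ - p + t) then
                      -(b' t₀ * mShift K (t₀ - p) (a (u - (t₀ - p)))) else 0)) * fShift K u y
                  = (if u ∈ S'.erase t₀ then
                      toFrac K (mShift K (t₀ - p) (a p)) * (toFrac K (b' u) * fShift K u y)
                     else 0) +
                    (if u ∈ (S.erase p).image (fun t => t₀ - p + t) then
                      -(toFrac K (b' t₀) *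
                        (toFrac K (mShift K (t₀ - p) (a (u - (t₀ - p)))) * fShift K u y))
                     else 0) := by
                intro u _
                rw [map_add, add_mul]
                congr 1
                · split_ifs with h
                  · rw [map_mul]; ring
                  · simp
                · split_ifs with h
                  · rw [map_neg, map_mul]; ring
                  · simp
              rw [Finset.sum_congr rfl e1, Finset.sum_add_distrib]
              congr 1
              · rw [Finset.sum_ite_mem, Finset.union_inter_cancel_left, Finset.mul_sum]
              · rw [Finset.sum_ite_mem, Finset.union_inter_cancel_right]
                rw [Finset.sum_image (fun x _ y _ h => add_right_injective _ h)]
                rw [Finset.mul_sum, ← Finset.sum_neg_distrib]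
                apply Finset.sum_congr rfl
                intro t _
                rw [add_sub_cancel_left]
            beta_reduce
            rw [hsum]
            linear_combination toFrac K (mShift K (t₀ - p) (a p)) * hold
              + toFrac K (b' t₀) * h0
          · have hsub : ((S'.erase t₀) ∪ (S.erase p).image (fun t => t₀ - p + t)).filter
                (fun t => val t ≤ c ∧ val t < ((n : ℝ) + 1) * δ) ⊆ B.erase t₀ := by
              intro u hu
              obtain ⟨huS, hub⟩ := Finset.mem_filter.1 hu
              rcases Finset.mem_union.1 huS with hA' | hB'
              · obtain ⟨hne, hS'⟩ := Finset.mem_erase.1 hA'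
                exact Finset.mem_erase.2 ⟨hne, Finset.mem_filter.2 ⟨hS', hub⟩⟩
              · exfalso
                have := hBimgval u hB'
                have := hub.2
                linarith
            have hle := Finset.card_le_card hsub
            rw [Finset.card_erase_of_mem ht₀B] at hle
            omega
        · -- empty: same argument as zero case
          refine ⟨W, S', b, b', k1, k2, k3, ?_, k5⟩
          intro t ht
          by_cases hct : c < val t
          · exact Or.inl hct
          · right
            have : t ∉ B := fun h => hBne ⟨t, h⟩
            rw [hB, Finset.mem_filter] at this
            push_neg at this
            have h2' := this ht (le_of_not_gt hct)
            push_cast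
            linarith
    have H := main _ W0 S'0 b0 b'0 h1 h2 h3 h4 h5 le_rfl
    push_cast at H ⊢
    exact H


end Aux

/-- **Theorem (shift recurrence).**
Let `p ∈ S` be a corner point of the support `S` with inner vector `v` (so
`⟨v, s - p⟩ > 0` for all `s ∈ S \ {p}`).  Then for every `s > 0` there are finite sets
`W ⊆ { x ∈ ℤ^r : 0 ≤ ⟨v, x - p⟩ ≤ s⟨v,v⟩ }` (with `p ∈ W`) and
`S' ⊆ { x ∈ ℤ^r : ⟨v, x - p⟩ > s⟨v,v⟩ }` and polynomials `b, b_t ∈ K[n]` such that every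
solution `y ∈ K(n)` of `∑_{t ∈ S} a_t N^t y = f` satisfies
`(∏_{i ∈ W - p} N^i a_p) · N^p y = b + ∑_{t ∈ S'} b_t · N^t y`. -/
theorem shift_recurrence
    {K : Type*} [Field K] [CharZero K] {r : ℕ}
    (S : Finset (Fin r → ℤ)) (hS : S.Nonempty)
    (a : (Fin r → ℤ) → MvPolynomial (Fin r) K) (ha : ∀ t ∈ S, a t ≠ 0)
    (f : MvPolynomial (Fin r) K)
    (p : Fin r → ℤ) (hp : p ∈ S)
    (v : Fin r → ℝ) (hv : v ≠ 0)
    (hcorner : ∀ t ∈ S, t ≠ p → 0 < ∑ j, v j * ((t j - p j : ℤ) : ℝ))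
    (s : ℝ) (hs : 0 < s) :
    ∃ (W S' : Finset (Fin r → ℤ)) (b : MvPolynomial (Fin r) K)
      (b' : (Fin r → ℤ) → MvPolynomial (Fin r) K),
      p ∈ W ∧
      (∀ w ∈ W, 0 ≤ ∑ j, v j * ((w j - p j : ℤ) : ℝ) ∧
        (∑ j, v j * ((w j - p j : ℤ) : ℝ)) ≤ s * ∑ j, v j * v j) ∧
      (∀ t ∈ S', (s * ∑ j, v j * v j) < ∑ j, v j * ((t j - p j : ℤ) : ℝ)) ∧
      ∀ y : FractionRing (MvPolynomial (Fin r) K),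
        (∑ t ∈ S, toFrac K (a t) * fShift K t y = toFrac K f) →
        toFrac K (∏ w ∈ W, mShift K (w - p) (a p)) * fShift K p y
          = toFrac K b + ∑ t ∈ S', toFrac K (b' t) * fShift K t y := by
  classical
  set val : (Fin r → ℤ) → ℝ := fun t => ∑ j, v j * ((t j - p j : ℤ) : ℝ) with hvaldef
  have hval0 : val p = 0 := by simp [hvaldef]
  have hvaladd : ∀ u t, val (u + t - p) = val u + val t := by
    intro u t
    rw [hvaldef]
    simp only
    rw [← Finset.sum_add_distrib]
    apply Finset.sum_congr rfl
    intro j _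
    have h1 : (u + t - p) j = u j + t j - p j := rfl
    rw [h1]
    push_cast
    ring
  set c : ℝ := s * ∑ j, v j * v j with hcdef
  have hc : 0 < c := by
    apply mul_pos hs
    obtain ⟨j, hj⟩ := Function.ne_iff.1 hv
    exact Finset.sum_pos' (fun i _ => mul_self_nonneg _)
      ⟨j, Finset.mem_univ j, mul_self_pos.2 hj⟩
  obtain ⟨δ, hδ, hδle⟩ : ∃ δ : ℝ, 0 < δ ∧ ∀ t ∈ S, t ≠ p → δ ≤ val t := by
    by_cases hT : (S.erase p).Nonempty
    · refine ⟨(S.erase p).inf' hT val, ?_, ?_⟩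
      · rw [Finset.lt_inf'_iff]
        intro t ht
        exact hcorner t (Finset.mem_erase.1 ht).2 (Finset.mem_erase.1 ht).1
      · intro t htS htne
        exact Finset.inf'_le val (Finset.mem_erase.2 ⟨htne, htS⟩)
    · refine ⟨1, one_pos, fun t htS htne => absurd ⟨t, Finset.mem_erase.2 ⟨htne, htS⟩⟩ hT⟩
  obtain ⟨n, hn⟩ := exists_nat_gt (c / δ)
  have hnδ : c < (n : ℝ) * δ := by
    rw [div_lt_iff₀ hδ] at hn
    linarith
  obtain ⟨W, S', b, b', w1, w2, w3, w4, w5⟩ :=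
    key_lemma S a f p hp val hval0 hvaladd c δ (le_of_lt hc) hδ hδle n
  refine ⟨W, S', b, b', w1, w2, ?_, w5⟩
  intro t ht
  rcases w4 t ht with h | h
  · exact h
  · linarith
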